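/- arXiv:1304.0687 — 6 statements merged into one kernel-verified Lean document; each statement's English description precedes it below -/
import Mathlib

section
/- Let A be a vector space with bilinear product ∘ and linear map α : A → A such that ∘ is Hom-left-symmetric: (a∘b)∘α(c) - α(a)∘(b∘c) = (b∘a)∘α(c) - α(b)∘(a∘c), and Hom-right-Novikov: (a∘b)∘α(c) = (a∘c)∘α(b). Define [a,b] = a∘b - b∘a. Then the Hom-compatibility identity [c∘a, α(b)] - [c∘b, α(a)] + [c,a]∘α(b) - [c,b]∘α(a) - α(c)∘[a,b] = 0 holds for all a,b,c. -/
/-- In a Hom-Novikov algebra (Hom-left-symmetric and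
Hom-right-Novikov), the commutator bracket satisfies the Hom-compatibility
identity of Hom-Gelfand-Dorfman algebras. -/
theorem commutator_hom_gd_compatibility_of_homNovikov
    {k A : Type*} [Field k] [AddCommGroup A] [Module k A]
    (mul : A →ₗ[k] A →ₗ[k] A) (α : A →ₗ[k] A)
    (hls : ∀ a b c : A,
      mul (mul a b) (α c) - mul (α a) (mul b c)
        = mul (mul b a) (α c) - mul (α b) (mul a c))
    (hrn : ∀ a b c : A, mul (mul a b) (α c) = mul (mul a c) (α b))
    (br : A → A → A)
    (hbr : ∀ a b : A, br a b = mul a b - mul b a) :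
    ∀ a b c : A,
      br (mul c a) (α b) - br (mul c b) (α a) + mul (br c a) (α b)
        - mul (br c b) (α a) - mul (α c) (br a b) = 0 := by
  intro a b c
  have h1 := hrn c a b
  have h2 := hls a c b
  have h3 := hls b c a
  simp only [hbr, map_sub, LinearMap.sub_apply]
  linear_combination (norm := module) h1 - h2 + h3
end

section
/- Let (A, ∘, [,]) be a right Gelfand-Dorfman algebra and α : A → A an algebra morphism for both operations. Define a∘_α b = α(a∘b) and [a,b]_α = α([a,b]). Then (A, ∘_α, [,]_α, α) is a Hom-Gelfand-Dorfman algebra: ∘_α is Hom-left-symmetric and Hom-right-Novikov with respect to α, [,]_α is antisymmetric and satisfies the Hom-Jacobi identity with respect to α, and the Hom-compatibility identity [c∘_α a, α(b)]_α - [c∘_α b, α(a)]_α + [c,a]_α ∘_α α(b) - [c,b]_α ∘_α α(a) - α(c) ∘_α [a,b]_α = 0 holds. -/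
/-- If (A,∘,[,]) is a right Gelfand-Dorfman algebra and α is a
morphism for both operations, then (A, ∘_α, [,]_α, α), with a∘_α b = α(a∘b)
and [a,b]_α = α([a,b]), is a Hom-Gelfand-Dorfman algebra: identities
(1*)-(5*) hold. -/
theorem twisted_gd_is_homGD
    {k A : Type*} [Field k] [AddCommGroup A] [Module k A]
    (mul : A →ₗ[k] A →ₗ[k] A) (br : A →ₗ[k] A →ₗ[k] A) (α : A →ₗ[k] A)
    (hls : ∀ a b c : A,
      mul (mul a b) c - mul a (mul b c) = mul (mul b a) c - mul b (mul a c))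
    (hrn : ∀ a b c : A, mul (mul a b) c = mul (mul a c) b)
    (hanti : ∀ a b : A, br a b = - br b a)
    (hjac : ∀ a b c : A, br (br a b) c + br (br c a) b + br (br b c) a = 0)
    (hcomp : ∀ a b c : A,
      br (mul c a) b - br (mul c b) a + mul (br c a) b - mul (br c b) a
        - mul c (br a b) = 0)
    (hmorm : ∀ a b : A, α (mul a b) = mul (α a) (α b))
    (hmorb : ∀ a b : A, α (br a b) = br (α a) (α b))
    (mulα : A → A → A) (hmulα : ∀ a b : A, mulα a b = α (mul a b))
    (brα : A → A → A) (hbrα : ∀ a b : A, brα a b = α (br a b)) :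
    (∀ a b c : A,
      mulα (mulα a b) (α c) - mulα (α a) (mulα b c)
        = mulα (mulα b a) (α c) - mulα (α b) (mulα a c)) ∧
    (∀ a b c : A, mulα (mulα a b) (α c) = mulα (mulα a c) (α b)) ∧
    (∀ a b : A, brα a b = - brα b a) ∧
    (∀ a b c : A, brα (brα a b) (α c) + brα (brα c a) (α b)
        + brα (brα b c) (α a) = 0) ∧
    (∀ a b c : A,
      brα (mulα c a) (α b) - brα (mulα c b) (α a) + mulα (brα c a) (α b)
        - mulα (brα c b) (α a) - mulα (α c) (brα a b) = 0) := by
  refine ⟨fun a b c => ?_, fun a b c => ?_, fun a b => ?_, fun a b c => ?_,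
    fun a b c => ?_⟩ <;>
  simp only [hmulα, hbrα, ← hmorm, ← hmorb, ← map_sub, ← map_add, ← map_neg]
  · rw [hls]
  · rw [hrn]
  · rw [hanti a b, map_neg, map_neg]
    exact (map_neg α _).symm
  · rw [hjac, map_zero, map_zero]
  · rw [show br (mul c a) b - br (mul c b) a + mul (br c a) b - mul (br c b) a - mul c (br a b) = 0 from hcomp a b c, map_zero, map_zero]
end

section
/- Let V be a vector space with bilinear products ∘ and [,], with [,] antisymmetric. If the λ-bracket [a_λ b] = [a,b] + ∂(a∘b) + λ(a∘b + b∘a) (on the free ℂ[∂]-module ℂ[∂]⊗V, extended by sesquilinearity) satisfies the conformal Jacobi identity [a_λ[b_μ c]] - [b_μ[a_λ c]] = [[a_λ b]_{λ+μ} c], then the product ∘ is right-symmetric: (a∘b)∘c - a∘(b∘c) = (a∘c)∘b - a∘(c∘b) for all a,b,c. -/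
/-- Elements of ℂ[∂,λ,μ]⊗V, indexed by (∂-degree, λ-degree, μ-degree). -/
abbrev PolyDLM (V : Type*) [AddCommGroup V] := (ℕ × ℕ × ℕ) →₀ V

noncomputable def sng {V : Type*} [AddCommGroup V] (i j l : ℕ) (v : V) :
    PolyDLM V := Finsupp.single (i, j, l) v

/-- Multiplication by ∂. -/
noncomputable def shD {V : Type*} [AddCommGroup V] (f : PolyDLM V) : PolyDLM V :=
  Finsupp.mapDomain (fun q => (q.1 + 1, q.2.1, q.2.2)) f

/-- Multiplication by λ. -/
noncomputable def shL {V : Type*} [AddCommGroup V] (f : PolyDLM V) : PolyDLM V :=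
  Finsupp.mapDomain (fun q => (q.1, q.2.1 + 1, q.2.2)) f

/-- Multiplication by μ. -/
noncomputable def shM {V : Type*} [AddCommGroup V] (f : PolyDLM V) : PolyDLM V :=
  Finsupp.mapDomain (fun q => (q.1, q.2.1, q.2.2 + 1)) f

/-- [x_λ y] = [x,y] + ∂(x∘y) + λ(x∘y + y∘x), viewed in ℂ[∂,λ,μ]⊗V. -/
noncomputable def brL {V : Type*} [AddCommGroup V] (B S : V → V → V) (x y : V) :
    PolyDLM V :=
  sng 0 0 0 (B x y) + sng 1 0 0 (S x y) + sng 0 1 0 (S x y + S y x)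

/-- [x_μ y] = [x,y] + ∂(x∘y) + μ(x∘y + y∘x), viewed in ℂ[∂,λ,μ]⊗V. -/
noncomputable def brM {V : Type*} [AddCommGroup V] (B S : V → V → V) (x y : V) :
    PolyDLM V :=
  sng 0 0 0 (B x y) + sng 1 0 0 (S x y) + sng 0 0 1 (S x y + S y x)

/-- [x_{λ+μ} y] = [x,y] + ∂(x∘y) + (λ+μ)(x∘y + y∘x). -/
noncomputable def brLM {V : Type*} [AddCommGroup V] (B S : V → V → V) (x y : V) :
    PolyDLM V :=
  sng 0 0 0 (B x y) + sng 1 0 0 (S x y) + sng 0 1 0 (S x y + S y x)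
    + sng 0 0 1 (S x y + S y x)

/-- [a_λ [b_μ c]], computed by sesquilinearity from the generating bracket. -/
noncomputable def jacT1 {V : Type*} [AddCommGroup V] (B S : V → V → V)
    (a b c : V) : PolyDLM V :=
  brL B S a (B b c) + shD (brL B S a (S b c)) + shL (brL B S a (S b c))
    + shM (brL B S a (S b c + S c b))

/-- [b_μ [a_λ c]], computed by sesquilinearity from the generating bracket. -/
noncomputable def jacT2 {V : Type*} [AddCommGroup V] (B S : V → V → V)
    (a b c : V) : PolyDLM V :=
  brM B S b (B a c) + shD (brM B S b (S a c)) + shM (brM B S b (S a c))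
    + shL (brM B S b (S a c + S c a))

/-- [[a_λ b]_{λ+μ} c], computed by sesquilinearity from the generating
bracket: [[a,b]_{λ+μ}c] - (λ+μ)[(a∘b)_{λ+μ}c] + λ[(a∘b+b∘a)_{λ+μ}c]. -/
noncomputable def jacT3 {V : Type*} [AddCommGroup V] (B S : V → V → V)
    (a b c : V) : PolyDLM V :=
  brLM B S (B a b) c - shL (brLM B S (S a b) c) - shM (brLM B S (S a b) c)
    + shL (brLM B S (S a b + S b a) c)

/-- The conformal Jacobi identity
[a_λ[b_μ c]] - [b_μ[a_λ c]] = [[a_λ b]_{λ+μ} c] for the λ-bracket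
[a_λ b] = [a,b] + ∂(a∘b) + λ(a∘b + b∘a). -/
def ConformalJacobi {V : Type*} [AddCommGroup V] (B S : V → V → V) : Prop :=
  ∀ a b c : V, jacT1 B S a b c - jacT2 B S a b c = jacT3 B S a b c

/-- If [,] is antisymmetric and the λ-bracket
[a_λ b] = [a,b] + ∂(a∘b) + λ(a∘b + b∘a) satisfies the conformal Jacobi
identity, then ∘ is right-symmetric. -/
theorem rightSymmetric_of_conformalJacobi
    {V : Type*} [AddCommGroup V] [Module ℂ V]
    (B S : V →ₗ[ℂ] V →ₗ[ℂ] V)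
    (hanti : ∀ a b : V, B a b = - B b a)
    (hjac : ConformalJacobi (fun x y => B x y) (fun x y => S x y)) :
    ∀ a b c : V,
      S (S a b) c - S a (S b c) = S (S a c) b - S a (S c b) := by
  intro a b c
  have h1 := DFunLike.congr_fun (hjac a b c) ((2, 0, 0) : ℕ × ℕ × ℕ)
  have h2 := DFunLike.congr_fun (hjac a b c) ((1, 0, 1) : ℕ × ℕ × ℕ)
  simp only [jacT1, jacT2, jacT3, brL, brM, brLM, sng, shD, shL, shM,
    Finsupp.mapDomain_add, Finsupp.mapDomain_single,
    Finsupp.sub_apply, Finsupp.add_apply, Finsupp.single_apply] at h1 h2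
  norm_num [Prod.ext_iff] at h1 h2
  linear_combination (norm := module) h2 - (2:ℂ) • h1
end

section
/- Let V be a vector space with bilinear products ∘ and [,], with [,] antisymmetric. If the λ-bracket [a_λ b] = [a,b] + ∂(a∘b) + λ(a∘b + b∘a) on ℂ[∂]⊗V satisfies the conformal Jacobi identity, then ∘ satisfies the left Novikov identity a∘(b∘c) = b∘(a∘c) for all a,b,c. -/
/-- If [,] is antisymmetric and the λ-bracket
[a_λ b] = [a,b] + ∂(a∘b) + λ(a∘b + b∘a) satisfies the conformal Jacobi
identity, then ∘ satisfies the left Novikov identity a∘(b∘c) = b∘(a∘c). -/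
theorem leftNovikov_of_conformalJacobi
    {V : Type*} [AddCommGroup V] [Module ℂ V]
    (B S : V →ₗ[ℂ] V →ₗ[ℂ] V)
    (hanti : ∀ a b : V, B a b = - B b a)
    (hjac : ConformalJacobi (fun x y => B x y) (fun x y => S x y)) :
    ∀ a b c : V, S a (S b c) = S b (S a c) := by
  intro a b c
  have h := congrFun (congrArg DFunLike.coe (hjac a b c)) (2, 0, 0)
  simp only [jacT1, jacT2, jacT3, brL, brM, brLM, sng, shD, shL, shM,
    Finsupp.mapDomain_add, Finsupp.mapDomain_single, Finsupp.add_apply,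
    Finsupp.sub_apply, Finsupp.single_apply] at h
  simpa [Prod.ext_iff, sub_eq_zero] using h
end

section
/- Let V be a vector space with bilinear products ∘ and [,], with [,] antisymmetric. If the λ-bracket [a_λ b] = [a,b] + ∂(a∘b) + λ(a∘b + b∘a) on ℂ[∂]⊗V satisfies the conformal Jacobi identity, then the left Gelfand-Dorfman compatibility [a∘c, b] - [b∘c, a] + b∘[c,a] - a∘[c,b] - [a,b]∘c = 0 holds for all a,b,c in V. -/
lemma shD_apply100 {V : Type*} [AddCommGroup V] (f : PolyDLM V) :
    shD f (1, 0, 0) = f (0, 0, 0) :=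
  Finsupp.mapDomain_apply (by
    rintro ⟨a1, a2, a3⟩ ⟨b1, b2, b3⟩ h
    simp only [Prod.mk.injEq] at h ⊢
    omega) f (0, 0, 0)

lemma shL_apply100 {V : Type*} [AddCommGroup V] (f : PolyDLM V) :
    shL f (1, 0, 0) = 0 :=
  Finsupp.mapDomain_notin_range f _ (by rintro ⟨⟨i, j, l⟩, h⟩; simp at h)

lemma shM_apply100 {V : Type*} [AddCommGroup V] (f : PolyDLM V) :
    shM f (1, 0, 0) = 0 :=
  Finsupp.mapDomain_notin_range f _ (by rintro ⟨⟨i, j, l⟩, h⟩; simp at h)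

/-- If [,] is antisymmetric and the λ-bracket
[a_λ b] = [a,b] + ∂(a∘b) + λ(a∘b + b∘a) satisfies the conformal Jacobi
identity, then the left Gelfand-Dorfman compatibility identity
[a∘c,b] - [b∘c,a] + b∘[c,a] - a∘[c,b] - [a,b]∘c = 0 holds. -/
theorem leftGD_of_conformalJacobi
    {V : Type*} [AddCommGroup V] [Module ℂ V]
    (B S : V →ₗ[ℂ] V →ₗ[ℂ] V)
    (hanti : ∀ a b : V, B a b = - B b a)
    (hjac : ConformalJacobi (fun x y => B x y) (fun x y => S x y)) :
    ∀ a b c : V,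
      B (S a c) b - B (S b c) a + S b (B c a) - S a (B c b) - S (B a b) c = 0 := by
  intro a b c
  have h := DFunLike.congr_fun (hjac a b c) (1, 0, 0)
  simp only [jacT1, jacT2, jacT3, brL, brM, brLM, sng, Finsupp.sub_apply,
    Finsupp.add_apply, shD_apply100, shL_apply100, shM_apply100,
    Finsupp.single_apply, Prod.mk.injEq] at h
  simp at h
  rw [hanti (S a c) b, hanti (S b c) a, hanti c a, hanti c b]
  simp only [map_neg, LinearMap.neg_apply]
  rw [← h]
  abel
end

section
/- Let V be a vector space with bilinear products ∘ and [,] such that [,] is antisymmetric and satisfies Jacobi, ∘ is right-symmetric ((a∘b)∘c - a∘(b∘c) = (a∘c)∘b - a∘(c∘b)) and left Novikov (a∘(b∘c) = b∘(a∘c)), and the left Gelfand-Dorfman identity [a∘c,b] - [b∘c,a] + b∘[c,a] - a∘[c,b] - [a,b]∘c = 0 holds. Then the λ-bracket [a_λ b] = [a,b] + ∂(a∘b) + λ(a∘b + b∘a) on ℂ[∂]⊗V, extended by sesquilinearity, satisfies antisymmetry [b_λ a] = -[a_{-λ-∂} b] and the conformal Jacobi identity [a_λ[b_μ c]] - [b_μ[a_λ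 c]] = [[a_λ b]_{λ+μ} c]. -/
/-- Elements of ℂ[∂,λ]⊗V, indexed by (∂-degree, λ-degree). -/
abbrev PolyDL (V : Type*) [AddCommGroup V] := (ℕ × ℕ) →₀ V

/-- The λ-bracket [a_λ b] = [a,b] + ∂(a∘b) + λ(a∘b + b∘a) in ℂ[∂,λ]⊗V. -/
noncomputable def lambdaBr {V : Type*} [AddCommGroup V]
    (B S : V → V → V) (a b : V) : PolyDL V :=
  Finsupp.single (0, 0) (B a b) + Finsupp.single (1, 0) (S a b)
    + Finsupp.single (0, 1) (S a b + S b a)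

/-- Substitution λ ↦ -λ-∂ on ℂ[∂,λ]⊗V. -/
noncomputable def substNegLambda {V : Type*} [AddCommGroup V] [Module ℂ V]
    (f : PolyDL V) : PolyDL V :=
  f.sum (fun q v => ∑ l ∈ Finset.range (q.2 + 1),
    Finsupp.single (q.1 + (q.2 - l), l)
      ((((-1 : ℂ) ^ q.2) * (q.2.choose l : ℂ)) • v))

set_option maxHeartbeats 1000000 in
/-- If [,] is antisymmetric and satisfies Jacobi, ∘ is
right-symmetric and left Novikov, and the left Gelfand-Dorfman identity
holds, then the λ-bracket [a_λ b] = [a,b] + ∂(a∘b) + λ(a∘b + b∘a) satisfies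
the conformal antisymmetry axiom [b_λ a] = -[a_{-λ-∂} b] and the conformal
Jacobi identity. -/
theorem conformal_axioms_of_GD
    {V : Type*} [AddCommGroup V] [Module ℂ V]
    (B S : V →ₗ[ℂ] V →ₗ[ℂ] V)
    (hanti : ∀ a b : V, B a b = - B b a)
    (hjacB : ∀ a b c : V, B (B a b) c + B (B c a) b + B (B b c) a = 0)
    (hrs : ∀ a b c : V,
      S (S a b) c - S a (S b c) = S (S a c) b - S a (S c b))
    (hln : ∀ a b c : V, S a (S b c) = S b (S a c))
    (hgd : ∀ a b c : V,
      B (S a c) b - B (S b c) a + S b (B c a) - S a (B c b) - S (B a b) c = 0) :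
    (∀ a b : V,
      lambdaBr (fun x y => B x y) (fun x y => S x y) b a
        = - substNegLambda (lambdaBr (fun x y => B x y) (fun x y => S x y) a b)) ∧
    ConformalJacobi (fun x y => B x y) (fun x y => S x y) := by
  classical
  -- auxiliary orientation lemmas
  have hBn : ∀ x y : V, B (-x) y = - B x y := by intro x y; simp
  have hSn : ∀ x y : V, S (-x) y = - S x y := by intro x y; simp
  have hBarg : ∀ x y z : V, B (B x y) z = - B (B y x) z := by
    intro x y z; rw [hanti x y, hBn]
  have hSarg : ∀ x y z : V, S (B x y) z = - S (B y x) z := by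
    intro x y z; rw [hanti x y, hSn]
  have hSin : ∀ x y z : V, S x (B y z) = - S x (B z y) := by
    intro x y z; rw [hanti y z, map_neg]
  have hgd' : ∀ x y z : V,
      S x (B y z) + B x (S y z) - S y (B x z) - B y (S x z) - S (B x y) z = 0 := by
    intro x y z
    linear_combination (norm := abel) hgd x y z + hSin x y z + hanti x (S y z)
      - hSin y x z - hanti y (S x z)
  constructor
  · intro a b
    simp only [lambdaBr, substNegLambda]
    rw [Finsupp.sum_add_index' (by simp)
          (by intros; simp [smul_add, Finsupp.single_add, Finset.sum_add_distrib]),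
        Finsupp.sum_add_index' (by simp)
          (by intros; simp [smul_add, Finsupp.single_add, Finset.sum_add_distrib])]
    rw [Finsupp.sum_single_index (by simp), Finsupp.sum_single_index (by simp),
        Finsupp.sum_single_index (by simp)]
    simp [Finset.sum_range_succ, hanti b a, Finsupp.single_neg, add_comm]
    abel
  · intro a b c
    set B' : V → V → V := fun x y => B x y with hB'
    set S' : V → V → V := fun x y => S x y with hS'
    have hBa2 : ∀ (x u v : V), B' x (u + v) = B' x u + B' x v := by
      intro x u v; simp [hB']
    have hSa2 : ∀ (x u v : V), S' x (u + v) = S' x u + S' x v := by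
      intro x u v; simp [hS']
    have hBa1 : ∀ (u v y : V), B' (u + v) y = B' u y + B' v y := by
      intro u v y; simp [hB']
    have hSa1 : ∀ (u v y : V), S' (u + v) y = S' u y + S' v y := by
      intro u v y; simp [hS']
    have hD000 : B' a (B' b c) - B' b (B' a c) - B' (B' a b) c = 0 := by
      simp only [hB']
      linear_combination (norm := abel) hanti a (B b c) - hanti b (B a c)
        + hBarg a c b - hjacB a b c
    have hD100 : S' a (B' b c) + B' a (S' b c) - S' b (B' a c) - B' b (S' a c)
        - S' (B' a b) c = 0 := by
      simp only [hB', hS']; exact hgd' a b c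
    have hD200 : S' a (S' b c) - S' b (S' a c) = 0 := by
      simp only [hS']
      linear_combination (norm := abel) hln a b c
    have hD010 : S' a (B' b c) + S' (B' b c) a + B' a (S' b c) - B' b (S' a c)
        - B' b (S' c a) - (S' (B' a b) c + S' c (B' a b) + B' (S' b a) c) = 0 := by
      simp only [hB', hS']
      linear_combination (norm := abel) hgd' a b c - hgd' b c a + hSin b a c
        - hSin c a b - hanti (S b a) c
    have hD110 : S' a (S' b c) + S' (S' b c) a + S' a (S' b c) - S' b (S' a c)
        - S' b (S' c a) - S' (S' b a) c = 0 := by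
      simp only [hS']
      linear_combination (norm := abel) hrs b c a + 2 • hln a b c
    have hD020 : S' a (S' b c) + S' (S' b c) a
        - (S' (S' b a) c + S' c (S' b a)) = 0 := by
      simp only [hS']
      linear_combination (norm := abel) hrs b c a + hln a b c + hln b c a
    have hD001 : B' a (S' b c) + B' a (S' c b) - (S' b (B' a c) + S' (B' a c) b)
        - B' b (S' a c) - (S' (B' a b) c + S' c (B' a b) - B' (S' a b) c) = 0 := by
      simp only [hB', hS']
      linear_combination (norm := abel) hgd' a c b - hSin a b c + hanti (S a b) c
        - hgd' b a c - hSarg b a c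
    have hD101 : S' a (S' b c) + S' a (S' c b) - (S' b (S' a c) + S' (S' a c) b)
        - S' b (S' a c) + S' (S' a b) c = 0 := by
      simp only [hS']
      linear_combination (norm := abel) 2 • hln a b c - hrs a c b
    have hD011 : S' a (S' b c) + S' a (S' c b) + S' (S' b c) a + S' (S' c b) a
        - (S' b (S' a c) + S' b (S' c a) + S' (S' a c) b + S' (S' c a) b)
        - (S' (S' b a) c + S' c (S' b a) - (S' (S' a b) c + S' c (S' a b))) = 0 := by
      simp only [hS']
      linear_combination (norm := abel) hrs b c a + hrs c b a - hrs a c b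
        + 2 • hln a b c
    have hD002 : -(S' b (S' a c) + S' (S' a c) b)
        + (S' (S' a b) c + S' c (S' a b)) = 0 := by
      simp only [hS']
      linear_combination (norm := abel) hln a b c - hln a c b - hrs a c b
    rw [← sub_eq_zero]
    have claim : jacT1 B' S' a b c - jacT2 B' S' a b c - jacT3 B' S' a b c
        = Finsupp.single ((0:ℕ), (0:ℕ), (0:ℕ))
            (B' a (B' b c) - B' b (B' a c) - B' (B' a b) c)
        + Finsupp.single ((1:ℕ), (0:ℕ), (0:ℕ))
            (S' a (B' b c) + B' a (S' b c) - S' b (B' a c) - B' b (S' a c)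
              - S' (B' a b) c)
        + Finsupp.single ((2:ℕ), (0:ℕ), (0:ℕ)) (S' a (S' b c) - S' b (S' a c))
        + Finsupp.single ((0:ℕ), (1:ℕ), (0:ℕ))
            (S' a (B' b c) + S' (B' b c) a + B' a (S' b c) - B' b (S' a c)
              - B' b (S' c a) - (S' (B' a b) c + S' c (B' a b) + B' (S' b a) c))
        + Finsupp.single ((1:ℕ), (1:ℕ), (0:ℕ))
            (S' a (S' b c) + S' (S' b c) a + S' a (S' b c) - S' b (S' a c)
              - S' b (S' c a) - S' (S' b a) c)
        + Finsupp.single ((0:ℕ), (2:ℕ), (0:ℕ))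
            (S' a (S' b c) + S' (S' b c) a - (S' (S' b a) c + S' c (S' b a)))
        + Finsupp.single ((0:ℕ), (0:ℕ), (1:ℕ))
            (B' a (S' b c) + B' a (S' c b) - (S' b (B' a c) + S' (B' a c) b)
              - B' b (S' a c) - (S' (B' a b) c + S' c (B' a b) - B' (S' a b) c))
        + Finsupp.single ((1:ℕ), (0:ℕ), (1:ℕ))
            (S' a (S' b c) + S' a (S' c b) - (S' b (S' a c) + S' (S' a c) b)
              - S' b (S' a c) + S' (S' a b) c)
        + Finsupp.single ((0:ℕ), (1:ℕ), (1:ℕ))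
            (S' a (S' b c) + S' a (S' c b) + S' (S' b c) a + S' (S' c b) a
              - (S' b (S' a c) + S' b (S' c a) + S' (S' a c) b + S' (S' c a) b)
              - (S' (S' b a) c + S' c (S' b a) - (S' (S' a b) c + S' c (S' a b))))
        + Finsupp.single ((0:ℕ), (0:ℕ), (2:ℕ))
            (-(S' b (S' a c) + S' (S' a c) b)
              + (S' (S' a b) c + S' c (S' a b))) := by
      simp only [jacT1, jacT2, jacT3, brL, brM, brLM, shD, shL, shM, sng,
        hBa1, hBa2, hSa1, hSa2,
        Finsupp.mapDomain_add, Finsupp.mapDomain_single,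
        Finsupp.single_add, Finsupp.single_sub, Finsupp.single_neg]
      abel
    rw [claim, hD000, hD100, hD200, hD010, hD110, hD020, hD001, hD101, hD011,
      hD002]
    simp
end
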